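/- Let e¹ : ℕ × ℕ → ℚ be defined by e¹(1,0) = 1, e¹(1,g) = 0 for g ≥ 1, e¹(0,g) = 0 for all g, and for n ≥ 2 and all g ≥ 0: e¹(n,g) = (1/2)·[ Σ_{m=1}^{n−1} binom(n,m)·Σ_{ℓ=0}^{g} e¹(m,ℓ)·e¹(n−m,g−ℓ) + Σ_{k=3}^{n} (k−2)·Σ over compositions (c_1,…,c_{k−1}) of n−1 into k−1 parts and compositions (d_1,…,d_{k−1}) of g−1+(k−1) into k−1 parts of n·((n−1)!/(c_1!·c_2!⋯c_{k−1}!))·Π_{i=1}^{k−1} e¹(c_i,d_i−1) ]. (This recursion counts leaf-labeled simplex time-consistent galled trees with n leaves and g galls.) Then for every integer m ≥ 1, e¹(2m+1, m) = (2m−1)!!·(2m+1)!/(m+1)!, where (2m−1)!! denotes the double factorial of 2m−1. -/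

import Mathlib

/-!
Call `n - 2g` the excess of `e n g`. For a root split the excesses of the two subtrees add up to
`n - 2g`, for a root gall with `k - 1` children to `n - 2g + 1`; a child of excess `≤ 0` contributes
zero. By strong induction on `n`, `e n g = 0` whenever `n ≤ 2g`. On the line `n = 2g + 1` splits
vanish and only galls with two children, both of excess `1`, survive, so `F m = e (2m+1) m` satisfies
`F (m+1) = (2m+3)/2 · ∑ binom(2m+2, 2ℓ+1) F ℓ F (m-ℓ)`. Writing `F m = (2m+1)! G m` this is
`G (m+1) = ½ ∑ G ℓ G (m-ℓ)`, Segner's recursion for `2^m G m`; hence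
`F m = (2m+1)! Cₘ / 2^m = (2m-1)!! (2m+1)! / (m+1)!`.
-/

open Finset

/-- The compositions of `a` into `b` (positive) parts, as functions `Fin b → ℕ`.
Every part of a composition of `a` lies in `[1, a]`, so filtering inside
`Finset.Icc 1 a` captures all compositions. -/
def compositions (a b : ℕ) : Finset (Fin b → ℕ) :=
  (Fintype.piFinset fun _ => Finset.Icc 1 a).filter fun c => ∑ i, c i = a

open Nat

lemma le_of_mem_compositions {a b : ℕ} {c : Fin b → ℕ} (hc : c ∈ compositions a b) (i : Fin b) :
    c i ≤ a :=
  (mem_Icc.1 (Fintype.mem_piFinset.1 (mem_filter.1 hc).1 i)).2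

lemma mem_compositions_two {s : ℕ} {c : Fin 2 → ℕ} :
    c ∈ compositions s 2 ↔ 1 ≤ c 0 ∧ 1 ≤ c 1 ∧ c 0 + c 1 = s := by
  simp only [compositions, mem_filter, Fintype.mem_piFinset, mem_Icc, Fin.forall_fin_two,
    Fin.sum_univ_two]
  omega

lemma exists_succ_lt_two_mul_of_mem_compositions {a b s : ℕ} {c d : Fin b → ℕ}
    (hc : c ∈ compositions a b) (hd : d ∈ compositions s b) (h : a + b < 2 * s) :
    ∃ i, c i + 1 < 2 * d i := by
  simp only [compositions, mem_filter] at hc hd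
  obtain ⟨i, -, hi⟩ := exists_lt_of_sum_lt (s := univ) (f := fun i => c i + 1)
    (g := fun i => 2 * d i) (by simpa [sum_add_distrib, ← mul_sum, hc.2, hd.2] using h)
  exact ⟨i, hi⟩

lemma sum_compositions_two {M : Type*} [AddCommMonoid M] (s : ℕ) (f : (Fin 2 → ℕ) → M) :
    ∑ c ∈ compositions s 2, f c = ∑ i ∈ Ico 1 s, f ![i, s - i] := by
  symm
  refine sum_nbij' (fun i => ![i, s - i]) (fun c => c 0) ?_ ?_ ?_ ?_ (fun _ _ => rfl)
  · intro i hi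
    rw [mem_Ico] at hi
    simp only [mem_compositions_two, Matrix.cons_val_zero, Matrix.cons_val_one]
    omega
  · intro c hc
    rw [mem_compositions_two] at hc
    rw [mem_Ico]
    omega
  · intro i _
    simp
  · intro c hc
    rw [mem_compositions_two] at hc
    ext i
    fin_cases i
    · simp
    · simp; omega

lemma multinomial_univ_two_eq_choose (a b : ℕ) :
    Nat.multinomial univ ![a, b] = (a + b).choose a := by
  rw [Nat.multinomial_univ_two, Nat.choose_eq_factorial_div_factorial (Nat.le_add_right a b),
    Nat.add_sub_cancel_left]

lemma factorial_two_mul_eq_two_pow_mul (m : ℕ) : (2 * m)! = 2 ^ m * m ! * (2 * m - 1)‼ := by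
  rcases m with _ | m
  · rfl
  · rw [← doubleFactorial_two_mul, show 2 * (m + 1) = 2 * m + 1 + 1 by ring,
      factorial_eq_mul_doubleFactorial]
    rfl

lemma catalan_mul_factorial_succ (m : ℕ) :
    catalan m * (m + 1)! = 2 ^ m * (2 * m - 1)‼ := by
  refine Nat.eq_of_mul_eq_mul_right (factorial_pos m) ?_
  calc catalan m * (m + 1)! * m ! = m.centralBinom * (m ! * (2 * m - m)!) := by
        rw [← succ_mul_catalan_eq_centralBinom, factorial_succ,
          show 2 * m - m = m by omega]; ring
    _ = (2 * m)! := by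
        rw [centralBinom_eq_two_mul_choose, ← mul_assoc]
        exact choose_mul_factorial_mul_factorial (by omega)
    _ = 2 ^ m * (2 * m - 1)‼ * m ! := by rw [factorial_two_mul_eq_two_pow_mul]; ring

lemma choose_mul_factorial_odd {m ℓ : ℕ} (h : ℓ ≤ m) :
    ((2 * m + 2).choose (2 * ℓ + 1) : ℚ) * (2 * ℓ + 1)! * (2 * (m - ℓ) + 1)! = (2 * m + 2)! := by
  have := choose_mul_factorial_mul_factorial (n := 2 * m + 2) (k := 2 * ℓ + 1) (by omega)
  rw [show 2 * m + 2 - (2 * ℓ + 1) = 2 * (m - ℓ) + 1 by omega] at this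
  exact_mod_cast this

lemma eq_factorial_mul_catalan_div_two_pow {F : ℕ → ℚ} (h0 : F 0 = 1)
    (hsucc : ∀ m, F (m + 1) = (2 * m + 3) / 2 *
      ∑ ℓ ∈ range (m + 1), ((2 * m + 2).choose (2 * ℓ + 1) : ℚ) * F ℓ * F (m - ℓ))
    (m : ℕ) : F m = (2 * m + 1)! * catalan m / 2 ^ m := by
  induction m using Nat.strong_induction_on with
  | _ m ih =>
  rcases m with _ | m
  · simp [h0]
  have hterm : ∀ ℓ ∈ range (m + 1), ((2 * m + 2).choose (2 * ℓ + 1) : ℚ) * F ℓ * F (m - ℓ)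
      = (2 * m + 2)! / 2 ^ m * (catalan ℓ * catalan (m - ℓ) : ℕ) := by
    intro ℓ hℓ
    have hℓm : ℓ ≤ m := by rw [mem_range] at hℓ; omega
    rw [ih ℓ (by omega), ih (m - ℓ) (by omega), ← choose_mul_factorial_odd hℓm,
      ← pow_sub_mul_pow (2 : ℚ) hℓm]
    push_cast
    field_simp
  have hcat : ∑ ℓ ∈ range (m + 1), catalan ℓ * catalan (m - ℓ) = catalan (m + 1) := by
    rw [catalan_succ, Fin.sum_univ_eq_sum_range (fun i => catalan i * catalan (m - i))]
  rw [hsucc, sum_congr rfl hterm, ← mul_sum, ← Nat.cast_sum, hcat,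
    show 2 * (m + 1) + 1 = (2 * m + 2) + 1 by ring, factorial_succ (2 * m + 2)]
  push_cast
  field_simp
  ring

def splitSum (e : ℕ → ℕ → ℚ) (n g : ℕ) : ℚ :=
  ∑ m ∈ Ico 1 n, (n.choose m : ℚ) * ∑ ℓ ∈ range (g + 1), e m ℓ * e (n - m) (g - ℓ)

-- The root gall has `k - 1` children; child `i` has `c i` leaves and `d i - 1` galls.
def gallSum (e : ℕ → ℕ → ℚ) (n g k : ℕ) : ℚ :=
  ∑ c ∈ compositions (n - 1) (k - 1), ∑ d ∈ compositions (g + (k - 1) - 1) (k - 1),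
    (n : ℚ) * (Nat.multinomial univ c : ℚ) * ∏ i : Fin (k - 1), e (c i) (d i - 1)

def GalledTreeRecursion (e : ℕ → ℕ → ℚ) : Prop :=
  ∀ n g, 2 ≤ n →
    e n g = 1 / 2 * (splitSum e n g + ∑ k ∈ Icc 3 n, ((k : ℚ) - 2) * gallSum e n g k)

section Recursion

variable {e : ℕ → ℕ → ℚ}

lemma splitSum_eq_zero {n g : ℕ} (hvan : ∀ a b, a < n → a ≤ 2 * b → e a b = 0)
    (h : n ≤ 2 * g + 1) : splitSum e n g = 0 := by
  refine sum_eq_zero fun m hm => mul_eq_zero_of_right _ (sum_eq_zero fun ℓ hℓ => ?_)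
  rw [mem_Ico] at hm
  rw [mem_range] at hℓ
  rcases le_or_gt m (2 * ℓ) with hmℓ | hmℓ
  · rw [hvan m ℓ (by omega) hmℓ, zero_mul]
  · rw [hvan (n - m) (g - ℓ) (by omega) (by omega), mul_zero]

lemma gallSum_eq_zero {n g k : ℕ} (hvan : ∀ a b, a < n → a ≤ 2 * b → e a b = 0)
    (hn : 1 ≤ n) (hk : 2 ≤ k) (h : n + 2 < 2 * g + k) : gallSum e n g k = 0 := by
  refine sum_eq_zero fun c hc => sum_eq_zero fun d hd => mul_eq_zero_of_right _ ?_
  obtain ⟨i, hi⟩ := exists_succ_lt_two_mul_of_mem_compositions hc hd (by omega)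
  have hci : c i ≤ n - 1 := le_of_mem_compositions hc i
  exact prod_eq_zero (mem_univ i) (hvan _ _ (by omega) (by omega))

lemma eq_zero_of_le_two_mul (h0g : ∀ g, e 0 g = 0) (h1g : ∀ g, 1 ≤ g → e 1 g = 0)
    (hrec : GalledTreeRecursion e)
    (n g : ℕ) (h : n ≤ 2 * g) : e n g = 0 := by
  induction n using Nat.strong_induction_on generalizing g with
  | _ n ih =>
  match n, h with
  | 0, _ => exact h0g g
  | 1, h => exact h1g g (by omega)
  | n + 2, h =>
    have hvan : ∀ a b, a < n + 2 → a ≤ 2 * b → e a b = 0 := fun a b ha => ih a ha b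
    rw [hrec _ g (by omega), splitSum_eq_zero hvan (by omega),
      sum_eq_zero fun k hk => mul_eq_zero_of_right _ <|
        gallSum_eq_zero hvan (by omega) (by rw [mem_Icc] at hk; omega)
          (by rw [mem_Icc] at hk; omega)]
    norm_num

lemma gallSum_three_odd (hvan : ∀ a b, a ≤ 2 * b → e a b = 0) (m : ℕ) :
    gallSum e (2 * m + 3) (m + 1) 3 = (2 * m + 3) * ∑ ℓ ∈ range (m + 1),
      ((2 * m + 2).choose (2 * ℓ + 1) : ℚ) * e (2 * ℓ + 1) ℓ * e (2 * (m - ℓ) + 1) (m - ℓ) := by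
  show ∑ c ∈ compositions (2 * m + 2) 2, ∑ d ∈ compositions (m + 2) 2,
    ((2 * m + 3 : ℕ) : ℚ) * (Nat.multinomial univ c : ℚ) * ∏ i : Fin 2, e (c i) (d i - 1) = _
  simp only [sum_compositions_two]
  rw [sum_comm, sum_Ico_eq_sum_range, show m + 2 - 1 = m + 1 by omega, mul_sum]
  refine sum_congr rfl fun ℓ hℓ => ?_
  rw [mem_range] at hℓ
  rw [sum_eq_single_of_mem (2 * ℓ + 1) (by rw [mem_Ico]; omega)]
  · simp only [Fin.prod_univ_two, Matrix.cons_val_zero, Matrix.cons_val_one,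
      multinomial_univ_two_eq_choose, show 2 * m + 2 - (2 * ℓ + 1) = 2 * (m - ℓ) + 1 by omega,
      show 2 * ℓ + 1 + (2 * (m - ℓ) + 1) = 2 * m + 2 by omega,
      show m + 2 - (1 + ℓ) - 1 = m - ℓ by omega, show 1 + ℓ - 1 = ℓ by omega]
    push_cast
    ring
  · intro i hi hne
    rw [mem_Ico] at hi
    simp only [Fin.prod_univ_two, Matrix.cons_val_zero, Matrix.cons_val_one]
    rcases lt_or_gt_of_ne hne with hlt | hgt
    · rw [hvan i (1 + ℓ - 1) (by omega)]; ring
    · rw [hvan (2 * m + 2 - i) (m + 2 - (1 + ℓ) - 1) (by omega)]; ring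

lemma odd_diag_succ (h0g : ∀ g, e 0 g = 0) (h1g : ∀ g, 1 ≤ g → e 1 g = 0)
    (hrec : GalledTreeRecursion e)
    (m : ℕ) : e (2 * (m + 1) + 1) (m + 1) = (2 * m + 3) / 2 * ∑ ℓ ∈ range (m + 1),
      ((2 * m + 2).choose (2 * ℓ + 1) : ℚ) * e (2 * ℓ + 1) ℓ * e (2 * (m - ℓ) + 1) (m - ℓ) := by
  have hvan := eq_zero_of_le_two_mul h0g h1g hrec
  have hgall : ∀ k ∈ Icc 3 (2 * m + 3), k ≠ 3 →
      ((k : ℚ) - 2) * gallSum e (2 * m + 3) (m + 1) k = 0 := fun k hk hk3 =>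
    mul_eq_zero_of_right _ <| gallSum_eq_zero (fun a b _ => hvan a b) (by omega)
      (by rw [mem_Icc] at hk; omega) (by rw [mem_Icc] at hk; omega)
  rw [show 2 * (m + 1) + 1 = 2 * m + 3 by ring, hrec _ _ (by omega),
    splitSum_eq_zero (fun a b _ => hvan a b) (by omega),
    sum_eq_single_of_mem 3 (by rw [mem_Icc]; omega) hgall, gallSum_three_odd hvan]
  push_cast
  ring

end Recursion

/-- If `e¹ : ℕ × ℕ → ℚ` satisfies the recursion counting leaf-labeled simplex time-consistent
galled trees with `n` leaves and `g` galls (where `Nat.multinomial univ c = (n−1)!/(c₁!⋯c_{k−1}!)`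
for a composition `c` of `n−1`), then `e¹(2m+1, m) = (2m−1)!!·(2m+1)!/(m+1)!` for all `m ≥ 1`. -/
theorem stmt12 (e : ℕ → ℕ → ℚ)
    (h10 : e 1 0 = 1)
    (h1g : ∀ g, 1 ≤ g → e 1 g = 0)
    (h0g : ∀ g, e 0 g = 0)
    (hrec : ∀ n g, 2 ≤ n →
      e n g = (1 / 2) *
        ((∑ m ∈ Finset.Ico 1 n, (n.choose m : ℚ) *
            ∑ ℓ ∈ Finset.range (g + 1), e m ℓ * e (n - m) (g - ℓ))
         + (∑ k ∈ Finset.Icc 3 n, ((k : ℚ) - 2) *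
             ∑ c ∈ compositions (n - 1) (k - 1),
               ∑ d ∈ compositions (g + (k - 1) - 1) (k - 1),
                 (n : ℚ) * (Nat.multinomial Finset.univ c : ℚ) *
                   ∏ i : Fin (k - 1), e (c i) (d i - 1)))) :
    ∀ m : ℕ, 1 ≤ m →
      e (2 * m + 1) m
        = (Nat.doubleFactorial (2 * m - 1) : ℚ) * (Nat.factorial (2 * m + 1) : ℚ)
            / (Nat.factorial (m + 1) : ℚ) := by
  intro m _
  have hcat : (catalan m : ℚ) * (m + 1)! = 2 ^ m * (2 * m - 1)‼ := by
    exact_mod_cast catalan_mul_factorial_succ m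
  rw [eq_factorial_mul_catalan_div_two_pow (F := fun m => e (2 * m + 1) m) h10
    (odd_diag_succ h0g h1g hrec) m]
  field_simp
  exact hcat
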